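/- arXiv:math/0412154 — 5 statements merged into one kernel-verified Lean document; each statement's English description precedes it below -/
import Mathlib

section
/- For every real number x, the infinite product ∏_{k=0}^∞ (1 - 4x²/((2k+1)²π²)) converges and equals cos x. -/
open Real Filter Finset Topology

/-!
With `S_n(z) = π z ∏_{j<n} (1 - z²/(j+1)²)` the partial Euler products of `sin (π z)` and
`C_n(t) = ∏_{k<n} (1 - 4t²/(2k+1)²)`, factoring `1 - z²/(j+1)² = (j+1-z)(j+1+z)/(j+1)²` at
`z = t + 1/2` and regrouping the linear factors along the odd numbers gives the exact identity
`S_n(t + 1/2) (2n+1) = C_n(t) S_n(1/2) (2n+1+2t)`. Letting `n → ∞`, `S_n(1/2) → sin (π/2) = 1`,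
so `C_n(t) → sin (π t + π/2) = cos (π t)`. Unlike the duplication formula `sin 2x = 2 sin x cos x`,
this needs no separate treatment of the zeros of the sine.
-/

noncomputable def eulerSinPartialProd (z : ℝ) (n : ℕ) : ℝ :=
  π * z * ∏ j ∈ range n, (1 - z ^ 2 / ((j : ℝ) + 1) ^ 2)

noncomputable def eulerCosPartialProd (t : ℝ) (n : ℕ) : ℝ :=
  ∏ k ∈ range n, (1 - 4 * t ^ 2 / (2 * (k : ℝ) + 1) ^ 2)

theorem summable_one_div_two_mul_add_one_sq :
    Summable fun k : ℕ => 1 / (2 * (k : ℝ) + 1) ^ 2 := by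
  have hinj : Function.Injective fun k : ℕ => 2 * k + 1 := fun a b h => by simpa using h
  have := (summable_one_div_nat_pow.mpr one_lt_two).comp_injective hinj
  simpa [Function.comp_def] using this

theorem multipliable_one_sub_four_mul_sq_div_odd_sq (t : ℝ) :
    Multipliable fun k : ℕ => 1 - 4 * t ^ 2 / (2 * (k : ℝ) + 1) ^ 2 := by
  simp_rw [sub_eq_add_neg, ← mul_one_div (4 * t ^ 2)]
  exact Real.multipliable_one_add_of_summable (summable_one_div_two_mul_add_one_sq.mul_left _).neg

theorem eulerSinPartialProd_succ (z : ℝ) (n : ℕ) :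
    eulerSinPartialProd z (n + 1) = eulerSinPartialProd z n * (1 - z ^ 2 / ((n : ℝ) + 1) ^ 2) := by
  simp only [eulerSinPartialProd, prod_range_succ, mul_assoc]

theorem eulerCosPartialProd_succ (t : ℝ) (n : ℕ) :
    eulerCosPartialProd t (n + 1) =
      eulerCosPartialProd t n * (1 - 4 * t ^ 2 / (2 * (n : ℝ) + 1) ^ 2) :=
  prod_range_succ _ _

theorem eulerSinPartialProd_add_half (t : ℝ) (n : ℕ) :
    eulerSinPartialProd (t + 1 / 2) n * (2 * n + 1) =
      eulerCosPartialProd t n * eulerSinPartialProd (1 / 2) n * (2 * n + 1 + 2 * t) := by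
  induction n with
  | zero => simp only [eulerSinPartialProd, eulerCosPartialProd, range_zero, prod_empty]; ring
  | succ n ih =>
    rw [eulerSinPartialProd_succ, eulerSinPartialProd_succ, eulerCosPartialProd_succ]
    have h1 : (n : ℝ) + 1 ≠ 0 := by positivity
    have h2 : 2 * (n : ℝ) + 1 ≠ 0 := by positivity
    push_cast
    linear_combination (norm := skip)
      (1 - (t + 1 / 2) ^ 2 / ((n : ℝ) + 1) ^ 2) * (2 * n + 3) / (2 * n + 1) * ih
    field_simp
    ring

theorem tendsto_eulerSinPartialProd (z : ℝ) :
    Tendsto (eulerSinPartialProd z) atTop (𝓝 (sin (π * z))) :=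
  Real.tendsto_euler_sin_prod z

theorem tendsto_eulerCosPartialProd (t : ℝ) :
    Tendsto (eulerCosPartialProd t) atTop (𝓝 (cos (π * t))) := by
  have hcorr : Tendsto (fun n : ℕ => eulerSinPartialProd (1 / 2) n * (1 + 2 * t / (2 * n + 1)))
      atTop (𝓝 1) := by
    have hsin := tendsto_eulerSinPartialProd (1 / 2)
    rw [mul_one_div, sin_pi_div_two] at hsin
    have hdiv : Tendsto (fun n : ℕ => 2 * t / (2 * (n : ℝ) + 1)) atTop (𝓝 0) :=
      tendsto_const_nhds.div_atTop <| tendsto_atTop_add_const_right _ _ <|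
        tendsto_natCast_atTop_atTop.const_mul_atTop two_pos
    simpa using hsin.mul (hdiv.const_add 1)
  have hshift := tendsto_eulerSinPartialProd (t + 1 / 2)
  rw [mul_add, mul_one_div, sin_add_pi_div_two] at hshift
  refine (tendsto_mul_iff_of_ne_zero hcorr one_ne_zero).mp ?_
  rw [mul_one]
  refine hshift.congr fun n => ?_
  have h : 2 * (n : ℝ) + 1 ≠ 0 := by positivity
  rw [eq_div_of_mul_eq h (eulerSinPartialProd_add_half t n)]
  field_simp

theorem cos_eq_tprod (x : ℝ) :
    Multipliable (fun k : ℕ => 1 - 4 * x ^ 2 / ((2 * (k : ℝ) + 1) ^ 2 * π ^ 2)) ∧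
    ∏' k : ℕ, (1 - 4 * x ^ 2 / ((2 * (k : ℝ) + 1) ^ 2 * π ^ 2)) = Real.cos x := by
  have hfactor : ∀ k : ℕ, 4 * x ^ 2 / ((2 * (k : ℝ) + 1) ^ 2 * π ^ 2) =
      4 * (x / π) ^ 2 / (2 * (k : ℝ) + 1) ^ 2 := fun k => by
    rw [div_pow, mul_div_assoc', div_div, mul_comm (π ^ 2)]
  simp_rw [hfactor]
  have hmul := multipliable_one_sub_four_mul_sq_div_odd_sq (x / π)
  have hcos := tendsto_eulerCosPartialProd (x / π)
  rw [mul_div_cancel₀ x pi_ne_zero] at hcos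
  exact ⟨hmul, (hmul.hasProd_iff_tendsto_nat.mpr hcos).tprod_eq⟩
end

section
/- Define a_m := (2/π)^{2m} · ∑_{k=0}^∞ 1/(2k+1)^{2m} for each integer m ≥ 1, so that ∑_{k=0}^∞ 1/(2k+1)^{2m} = a_m·(π/2)^{2m}. Then a_1 = 1/2, and for every m ≥ 1 the recursion a_{m+1} = (2/(2m+1)) · ∑_{i=1}^{m} a_i · a_{m+1-i} holds. -/
/-!
Euler's argument. Write `x k = (2k+1)⁻²`. Multiplying out the series,
`∑_{i=1}^m λ(2i) λ(2m+2-2i) = ∑_{k,l} ∑_{i=1}^m x_k^i x_l^(m+1-i)`. The diagonal `k = l`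
contributes `m λ(2m+2)`. Off the diagonal the geometric sum splits into the partial fractions
`x_k^m / ((2l+1)² - (2k+1)²) + x_l^m / ((2k+1)² - (2l+1)²)`, and the telescoping identity
`∑_{l ≠ k} 1 / ((2l+1)² - (2k+1)²) = 1 / (4 (2k+1)²)` makes each half sum to `λ(2m+2) / 4`;
the double series of partial fractions converges absolutely, so the order of summation in the
second half may be swapped. Hence the convolution is `(m + 1/2) λ(2m+2)`, which is the recursion
after rescaling by `(2/π)^(2m+2)`. Finally `a 1 = 1/2` is `λ(2) = ζ(2) - ζ(2)/4 = π²/8`.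
-/

open Real Filter Topology Finset

section Telescoping

variable {G : Type*} [AddCommGroup G]

theorem sum_range_sub_add_eq (f : ℕ → G) (N M : ℕ) :
    ∑ n ∈ range M, (f n - f (n + N)) = ∑ i ∈ range N, f i - ∑ i ∈ range N, f (M + i) := by
  have h₁ : ∑ i ∈ range (M + N), f i = ∑ i ∈ range N, f i + ∑ n ∈ range M, f (n + N) := by
    rw [add_comm M N, sum_range_add]
    simp only [add_comm N]
  rw [sum_sub_distrib, sub_eq_sub_iff_add_eq_add, ← sum_range_add, h₁]

theorem hasSum_sub_nat_add [TopologicalSpace G] [IsTopologicalAddGroup G] [T2Space G]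
    {f : ℕ → G} {N : ℕ} (hs : Summable fun n ↦ f n - f (n + N)) (hf : Tendsto f atTop (𝓝 0)) :
    HasSum (fun n ↦ f n - f (n + N)) (∑ i ∈ range N, f i) := by
  rw [hs.hasSum_iff_tendsto_nat]
  simp_rw [sum_range_sub_add_eq]
  have htail : Tendsto (fun M ↦ ∑ i ∈ range N, f (M + i)) atTop (𝓝 0) := by
    simpa using tendsto_finsetSum (range N) fun i _ ↦
      (hf.comp (tendsto_add_atTop_nat i)).congr fun M ↦ by simp [add_comm]
  simpa using tendsto_const_nhds.sub htail

end Telescoping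

theorem Function.Odd.sum_range_sub_eq_zero {g : ℝ → ℝ} (hg : g.Odd) (k : ℕ) :
    ∑ i ∈ range (2 * k + 1), g (i - k) = 0 := by
  have hrefl := sum_range_reflect (fun i : ℕ ↦ g (i - k)) (2 * k + 1)
  have hneg : ∀ i ∈ range (2 * k + 1), g (((2 * k + 1 - 1 - i : ℕ) : ℝ) - k) = -g (i - k) := by
    intro i hi
    rw [Nat.cast_sub (by simp at hi; omega), ← hg]
    push_cast
    ring_nf
  rw [sum_congr rfl hneg, sum_neg_distrib] at hrefl
  linarith

theorem summable_inv_sq_intCast : Summable fun n : ℤ ↦ ((n : ℝ) ^ 2)⁻¹ := by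
  simpa only [one_div] using summable_one_div_int_pow.mpr one_lt_two

theorem summable_inv_sq_natCast_sub (k : ℕ) : Summable fun l : ℕ ↦ (((l : ℝ) - k) ^ 2)⁻¹ := by
  simpa [Function.comp_def] using
    summable_inv_sq_intCast.comp_injective (i := fun l : ℕ ↦ (l : ℤ) - k)
      fun a b h ↦ by simpa using h

theorem tsum_inv_sq_natCast_sub_le (k : ℕ) :
    ∑' l : ℕ, (((l : ℝ) - k) ^ 2)⁻¹ ≤ ∑' n : ℤ, ((n : ℝ) ^ 2)⁻¹ := by
  simpa [Function.comp_def] using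
    tsum_comp_le_tsum_of_inj summable_inv_sq_intCast (fun n ↦ by positivity)
      (i := fun l : ℕ ↦ (l : ℤ) - k) fun a b h ↦ by simpa using h

noncomputable def oddSq (k : ℕ) : ℝ := (2 * k + 1) ^ 2

theorem oddSq_pos (k : ℕ) : 0 < oddSq k := by
  unfold oddSq; positivity

theorem oddSq_sub_oddSq (k l : ℕ) : oddSq l - oddSq k = 4 * ((l : ℝ) - k) * (l + k + 1) := by
  unfold oddSq; ring

theorem sq_natCast_sub_le_abs_oddSq_sub_oddSq (k l : ℕ) :
    ((l : ℝ) - k) ^ 2 ≤ |oddSq l - oddSq k| := by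
  rw [oddSq_sub_oddSq, abs_mul, abs_mul, abs_of_pos (by positivity : (0 : ℝ) < l + k + 1),
    abs_of_pos (by norm_num : (0 : ℝ) < 4), ← sq_abs]
  have : |(l : ℝ) - k| ≤ l + k + 1 := abs_le.mpr ⟨by linarith, by linarith⟩
  nlinarith [mul_le_mul_of_nonneg_left this (abs_nonneg ((l : ℝ) - k))]

theorem abs_inv_oddSq_sub_oddSq_le (k l : ℕ) :
    |(oddSq l - oddSq k)⁻¹| ≤ (((l : ℝ) - k) ^ 2)⁻¹ := by
  rcases eq_or_ne l k with rfl | hlk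
  · simp
  · have : (l : ℝ) - k ≠ 0 := sub_ne_zero.mpr (Nat.cast_injective.ne hlk)
    rw [abs_inv]
    exact inv_anti₀ (by positivity) (sq_natCast_sub_le_abs_oddSq_sub_oddSq k l)

theorem summable_inv_oddSq_sub_oddSq (k : ℕ) : Summable fun l ↦ (oddSq l - oddSq k)⁻¹ :=
  (summable_inv_sq_natCast_sub k).of_norm_bounded (abs_inv_oddSq_sub_oddSq_le k)

-- The term `l = k` is `0⁻¹ = 0`, so this is the sum over `l ≠ k`.
theorem hasSum_inv_oddSq_sub_oddSq (k : ℕ) :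
    HasSum (fun l ↦ (oddSq l - oddSq k)⁻¹) (4 * oddSq k)⁻¹ := by
  set f : ℕ → ℝ := fun l ↦ ((l : ℝ) - k)⁻¹
  have hf : Tendsto f atTop (𝓝 0) :=
    (tendsto_atTop_add_const_right atTop (-(k : ℝ)) tendsto_natCast_atTop_atTop).inv_tendsto_atTop
  have hf0 : ∑ i ∈ range (2 * k + 1), f i = 0 :=
    Function.Odd.sum_range_sub_eq_zero (g := Inv.inv) (fun _ ↦ inv_neg) k
  -- `4 (2k+1) / ((2l+1)² - (2k+1)²) = 1 / (l-k) - 1 / (l+k+1)` telescopes with step `2k+1`.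
  have hpartial : ∀ l, f l - f (l + (2 * k + 1)) + (if l = k then (2 * (k : ℝ) + 1)⁻¹ else 0) =
      4 * (2 * k + 1) * (oddSq l - oddSq k)⁻¹ := by
    intro l
    rcases eq_or_ne l k with rfl | hlk
    · simp [f]
    · have : (l : ℝ) - k ≠ 0 := sub_ne_zero.mpr (Nat.cast_injective.ne hlk)
      have : (l : ℝ) + k + 1 ≠ 0 := by positivity
      have hshift : ((l + (2 * k + 1) : ℕ) : ℝ) - k = l + k + 1 := by push_cast; ring
      simp only [f, hshift, if_neg hlk, oddSq_sub_oddSq]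
      field_simp
      ring
  have htel : HasSum (fun l ↦ f l - f (l + (2 * k + 1))) 0 := by
    rw [← hf0]
    refine hasSum_sub_nat_add ?_ hf
    exact (((summable_inv_oddSq_sub_oddSq k).mul_left _).sub
      (hasSum_ite_eq k _).summable).congr fun l ↦ (eq_sub_of_add_eq (hpartial l)).symm
  have := htel.add (hasSum_ite_eq k (2 * (k : ℝ) + 1)⁻¹)
  simp only [hpartial, zero_add] at this
  rw [← hasSum_mul_left_iff (by positivity : 4 * (2 * (k : ℝ) + 1) ≠ 0)]
  rwa [show (2 * (k : ℝ) + 1)⁻¹ = 4 * (2 * (k : ℝ) + 1) * (4 * oddSq k)⁻¹ by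
    rw [oddSq]; field_simp] at this

theorem sum_Icc_inv_pow_mul_inv_pow {K : Type*} [Field K] {a b : K} (ha : a ≠ 0) (hb : b ≠ 0)
    (hab : a ≠ b) (m : ℕ) :
    ∑ i ∈ Icc 1 m, (a ^ i)⁻¹ * (b ^ (m + 1 - i))⁻¹ =
      (a ^ m)⁻¹ * (b - a)⁻¹ + (b ^ m)⁻¹ * (a - b)⁻¹ := by
  have hxy : a⁻¹ - b⁻¹ ≠ 0 := sub_ne_zero.mpr (inv_injective.ne hab)
  have hgeom : ∑ i ∈ Icc 1 m, (a ^ i)⁻¹ * (b ^ (m + 1 - i))⁻¹ =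
      a⁻¹ * b⁻¹ * ∑ t ∈ range m, a⁻¹ ^ t * b⁻¹ ^ (m - 1 - t) := by
    rw [← Ico_add_one_right_eq_Icc, sum_Ico_eq_sum_range, add_tsub_cancel_right, mul_sum]
    refine sum_congr rfl fun t ht ↦ ?_
    rw [show m + 1 - (1 + t) = m - 1 - t + 1 by simp at ht; omega, ← inv_pow, ← inv_pow]
    ring
  rw [hgeom, eq_div_of_mul_eq hxy (geom_sum₂_mul a⁻¹ b⁻¹ m), inv_pow, inv_pow]
  have : b - a ≠ 0 := sub_ne_zero.mpr hab.symm
  have : a - b ≠ 0 := sub_ne_zero.mpr hab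
  field_simp
  ring

noncomputable def oddInvPow (m k : ℕ) : ℝ := 1 / (2 * (k : ℝ) + 1) ^ (2 * m)

theorem oddInvPow_eq (m k : ℕ) : oddInvPow m k = (oddSq k ^ m)⁻¹ := by
  rw [oddInvPow, oddSq, one_div, pow_mul]

theorem oddInvPow_nonneg (m k : ℕ) : 0 ≤ oddInvPow m k := by
  unfold oddInvPow; positivity

theorem summable_oddInvPow {m : ℕ} (hm : 1 ≤ m) : Summable (oddInvPow m) := by
  have h := (summable_one_div_nat_pow.mpr (by omega : 1 < 2 * m)).comp_injective
    (i := fun k : ℕ ↦ 2 * k + 1) fun a b h ↦ by simpa using h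
  exact h.congr fun k ↦ by simp [oddInvPow]

noncomputable def crossTerm (m k l : ℕ) : ℝ := oddInvPow m k * (oddSq l - oddSq k)⁻¹

theorem hasSum_crossTerm (m k : ℕ) : HasSum (crossTerm m k) (oddInvPow (m + 1) k / 4) := by
  have := (oddSq_pos k).ne'
  rw [show oddInvPow (m + 1) k / 4 = oddInvPow m k * (4 * oddSq k)⁻¹ by
    rw [oddInvPow_eq, oddInvPow_eq, pow_succ]; field_simp]
  exact (hasSum_inv_oddSq_sub_oddSq k).mul_left _

theorem summable_uncurry_crossTerm {m : ℕ} (hm : 1 ≤ m) :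
    Summable (Function.uncurry (crossTerm m)) := by
  have hbound : Summable fun p : ℕ × ℕ ↦ oddInvPow m p.1 * (((p.2 : ℝ) - p.1) ^ 2)⁻¹ := by
    refine (summable_prod_of_nonneg fun p ↦ ?_).mpr ⟨fun k ↦ ?_, ?_⟩
    · have := oddInvPow_nonneg m p.1
      positivity
    · exact (summable_inv_sq_natCast_sub k).mul_left (oddInvPow m k)
    · refine Summable.of_nonneg_of_le (fun k ↦ ?_) (fun k ↦ ?_)
        ((summable_oddInvPow hm).mul_right (∑' n : ℤ, ((n : ℝ) ^ 2)⁻¹))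
      · exact tsum_nonneg fun l ↦ by have := oddInvPow_nonneg m k; positivity
      · dsimp only
        rw [tsum_mul_left]
        exact mul_le_mul_of_nonneg_left (tsum_inv_sq_natCast_sub_le k) (oddInvPow_nonneg m k)
  refine hbound.of_norm_bounded fun p ↦ ?_
  rw [Real.norm_eq_abs, Function.uncurry_apply_pair, crossTerm, abs_mul,
    abs_of_nonneg (oddInvPow_nonneg m _)]
  exact mul_le_mul_of_nonneg_left (abs_inv_oddSq_sub_oddSq_le _ _) (oddInvPow_nonneg m _)

theorem sum_Icc_oddInvPow_mul_oddInvPow (m k l : ℕ) :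
    ∑ i ∈ Icc 1 m, oddInvPow i k * oddInvPow (m + 1 - i) l =
      (if l = k then m * oddInvPow (m + 1) k else 0) + crossTerm m k l + crossTerm m l k := by
  rcases eq_or_ne l k with rfl | hlk
  · have hdiag : ∀ i ∈ Icc 1 m, oddInvPow i l * oddInvPow (m + 1 - i) l = oddInvPow (m + 1) l := by
      intro i hi
      rw [oddInvPow_eq, oddInvPow_eq, oddInvPow_eq, ← mul_inv, ← pow_add,
        Nat.add_sub_cancel' (by simp at hi; omega)]
    simp [sum_congr rfl hdiag, crossTerm]
  · have hsq : oddSq k ≠ oddSq l := by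
      unfold oddSq
      rw [Ne, sq_eq_sq₀ (by positivity) (by positivity)]
      exact_mod_cast fun h ↦ hlk (by omega)
    simp only [oddInvPow_eq, if_neg hlk, zero_add, crossTerm]
    exact sum_Icc_inv_pow_mul_inv_pow (oddSq_pos k).ne' (oddSq_pos l).ne' hsq m

theorem sum_tsum_mul_tsum {ι β γ : Type*} (s : Finset ι) {f : ι → β → ℝ} {g : ι → γ → ℝ}
    (hf : ∀ i ∈ s, Summable (f i)) (hg : ∀ i ∈ s, Summable (g i)) :
    ∑ i ∈ s, (∑' k, f i k) * (∑' l, g i l) = ∑' k, ∑' l, ∑ i ∈ s, f i k * g i l := by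
  have hprod : ∀ i ∈ s, (∑' k, f i k) * (∑' l, g i l) = ∑' k, ∑' l, f i k * g i l := by
    intro i _
    simp only [tsum_mul_left, tsum_mul_right]
  rw [sum_congr rfl hprod, ← Summable.tsum_finsetSum]
  · refine tsum_congr fun k ↦ ?_
    rw [← Summable.tsum_finsetSum fun i hi ↦ (hg i hi).mul_left (f i k)]
  · intro i hi
    simpa only [tsum_mul_left] using (hf i hi).mul_right (∑' l, g i l)

-- `dirichletLambda m` is `λ(2m)`.
noncomputable def dirichletLambda (m : ℕ) : ℝ := ∑' k, oddInvPow m k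

theorem sum_Icc_dirichletLambda_mul {m : ℕ} (hm : 1 ≤ m) :
    ∑ i ∈ Icc 1 m, dirichletLambda i * dirichletLambda (m + 1 - i) =
      (m + 1 / 2) * dirichletLambda (m + 1) := by
  have hP := summable_uncurry_crossTerm hm
  have hcol : ∀ k, Summable fun l ↦ crossTerm m l k := fun k ↦ hP.prod_symm.prod_factor k
  have hrow : ∀ k, HasSum (fun l ↦ (if l = k then m * oddInvPow (m + 1) k else 0) +
      crossTerm m k l + crossTerm m l k)
      (m * oddInvPow (m + 1) k + oddInvPow (m + 1) k / 4 + ∑' l, crossTerm m l k) :=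
    fun k ↦ ((hasSum_ite_eq k _).add (hasSum_crossTerm m k)).add (hcol k).hasSum
  have hsum := summable_oddInvPow (by omega : 1 ≤ m + 1)
  have hcolsum : Summable fun k ↦ ∑' l, crossTerm m l k := hP.prod_symm.prod
  calc ∑ i ∈ Icc 1 m, dirichletLambda i * dirichletLambda (m + 1 - i)
      = ∑' k, ∑' l, ∑ i ∈ Icc 1 m, oddInvPow i k * oddInvPow (m + 1 - i) l :=
        sum_tsum_mul_tsum _ (fun i hi ↦ summable_oddInvPow (by simp at hi; omega))
          (fun i hi ↦ summable_oddInvPow (by simp at hi; omega))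
    _ = ∑' k, (m * oddInvPow (m + 1) k + oddInvPow (m + 1) k / 4 + ∑' l, crossTerm m l k) := by
        simp only [sum_Icc_oddInvPow_mul_oddInvPow]
        exact tsum_congr fun k ↦ (hrow k).tsum_eq
    _ = m * dirichletLambda (m + 1) + dirichletLambda (m + 1) / 4 +
          ∑' k, ∑' l, crossTerm m l k := by
        rw [Summable.tsum_add ((hsum.mul_left _).add (hsum.div_const _)) hcolsum,
          Summable.tsum_add (hsum.mul_left _) (hsum.div_const _), tsum_mul_left, tsum_div_const]
        rfl
    _ = m * dirichletLambda (m + 1) + dirichletLambda (m + 1) / 4 +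
          dirichletLambda (m + 1) / 4 := by
        rw [hP.tsum_comm' (fun k ↦ (hasSum_crossTerm m k).summable) hcol,
          tsum_congr fun k ↦ (hasSum_crossTerm m k).tsum_eq, tsum_div_const]
        rfl
    _ = (m + 1 / 2) * dirichletLambda (m + 1) := by ring

theorem dirichletLambda_one : dirichletLambda 1 = π ^ 2 / 8 := by
  have hζ := hasSum_zeta_two
  have heven : HasSum (fun k : ℕ ↦ 1 / ((2 * k : ℕ) : ℝ) ^ 2) (π ^ 2 / 24) := by
    have h := hζ.mul_left (1 / 4)
    rw [show 1 / 4 * (π ^ 2 / 6) = π ^ 2 / 24 by ring] at h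
    exact h.congr_fun fun k ↦ by push_cast; ring
  have hodd : Summable fun k : ℕ ↦ 1 / ((2 * k + 1 : ℕ) : ℝ) ^ 2 :=
    hζ.summable.comp_injective (i := fun k : ℕ ↦ 2 * k + 1) fun a b h ↦ by simpa using h
  have hsplit := HasSum.even_add_odd (f := fun n : ℕ ↦ 1 / (n : ℝ) ^ 2) heven hodd.hasSum
  have : dirichletLambda 1 = ∑' k : ℕ, 1 / ((2 * k + 1 : ℕ) : ℝ) ^ 2 := by
    simp [dirichletLambda, oddInvPow]
  rw [this]
  linarith [hζ.unique hsplit]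

theorem euler_recursion (a : ℕ → ℝ)
    (ha : ∀ m : ℕ, 1 ≤ m →
      a m = (2 / π) ^ (2 * m) * ∑' k : ℕ, 1 / (2 * (k : ℝ) + 1) ^ (2 * m)) :
    a 1 = 1 / 2 ∧
    ∀ m : ℕ, 1 ≤ m →
      a (m + 1) = (2 / (2 * (m : ℝ) + 1)) * ∑ i ∈ Finset.Icc 1 m, a i * a (m + 1 - i) := by
  have ha' : ∀ m, 1 ≤ m → a m = (2 / π) ^ (2 * m) * dirichletLambda m := ha
  refine ⟨?_, fun m hm ↦ ?_⟩
  · rw [ha' 1 le_rfl, dirichletLambda_one, mul_one, div_pow]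
    field_simp
    norm_num
  · have hconv : ∑ i ∈ Icc 1 m, a i * a (m + 1 - i) = (2 / π) ^ (2 * (m + 1)) *
        ∑ i ∈ Icc 1 m, dirichletLambda i * dirichletLambda (m + 1 - i) := by
      rw [mul_sum]
      refine sum_congr rfl fun i hi ↦ ?_
      simp only [mem_Icc] at hi
      rw [ha' i hi.1, ha' (m + 1 - i) (by omega), mul_mul_mul_comm, ← pow_add,
        show 2 * i + 2 * (m + 1 - i) = 2 * (m + 1) by omega]
    rw [hconv, sum_Icc_dirichletLambda_mul hm, ha' (m + 1) (by omega)]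
    field_simp
end

section
/- For every real number x with |x| < π/2, the series ∑_{m=1}^∞ 2·a_m·x^{2m-1} converges and equals tan x, where a_m := (2/π)^{2m} · ∑_{k=0}^∞ 1/(2k+1)^{2m}. -/
/-!
Mathlib's Mittag-Leffler expansion of `π cot (π z)` together with `tan z = cot z - 2 cot 2z`
gives the partial fractions `tan x = ∑ₖ 8x / ((2k+1)²π² - 4x²)`. For `|x| < π/2` the `k`-th
partial fraction is a geometric series in `(2x / ((2k+1)π))²`, the resulting double series
converges absolutely, and summing it in the other order gives `∑ₘ 2 aₘ x^(2m-1)`.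
-/

open Real Complex

theorem Complex.tan_eq_cot_sub_two_mul_cot {z : ℂ} (h : sin (2 * z) ≠ 0) :
    tan z = cot z - 2 * cot (2 * z) := by
  rw [sin_two_mul] at h
  have hs : sin z ≠ 0 := by intro h0; simp [h0] at h
  have hc : cos z ≠ 0 := by intro h0; simp [h0] at h
  rw [tan_eq_sin_div_cos, cot_eq_cos_div_sin, cot_eq_cos_div_sin, sin_two_mul, cos_two_mul]
  field_simp
  linear_combination sin_sq_add_cos_sq z

theorem hasSum_cotTerm {z : ℂ} (hz : z ∈ integerComplement) :
    HasSum (cotTerm z) (π * cot (π * z) - 1 / z) :=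
  (summable_cotTerm hz).hasSum_iff_tendsto_nat.mpr (tendsto_logDeriv_euler_cot_sub hz)

theorem cotTerm_two_mul_two_mul_add_one (z : ℂ) (k : ℕ) :
    cotTerm (2 * z) (2 * k + 1) = cotTerm z k / 2 := by
  simp only [cotTerm]
  push_cast
  rw [show 2 * z - (2 * k + 1 + 1) = 2 * (z - (k + 1)) by ring,
    show 2 * z + (2 * k + 1 + 1) = 2 * (z + (k + 1)) by ring]
  simp only [one_div, mul_inv]
  ring

theorem neg_two_mul_cotTerm_two_mul_two_mul {z : ℂ} (hz : 2 * z ∈ integerComplement) (k : ℕ) :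
    -2 * cotTerm (2 * z) (2 * k) = 8 * z / ((2 * k + 1) ^ 2 - 4 * z ^ 2) := by
  have h₁ := integerComplement_add_ne_zero hz (2 * k + 1)
  have h₂ := integerComplement_add_ne_zero hz (-(2 * k + 1))
  push_cast at h₁ h₂
  rw [← sub_eq_add_neg] at h₂
  have h₃ : (2 * k + 1 : ℂ) ^ 2 - 4 * z ^ 2 ≠ 0 := by
    rw [show (2 * k + 1 : ℂ) ^ 2 - 4 * z ^ 2 = -((2 * z + (2 * k + 1)) * (2 * z - (2 * k + 1))) by
      ring]
    exact neg_ne_zero.2 (mul_ne_zero h₁ h₂)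
  simp only [cotTerm]
  push_cast
  rw [one_div_add_one_div h₂ h₁, mul_div_assoc', div_eq_div_iff (mul_ne_zero h₂ h₁) h₃]
  ring

theorem Complex.hasSum_pi_mul_tan {z : ℂ} (hz : 2 * z ∈ integerComplement) :
    HasSum (fun k : ℕ => 8 * z / ((2 * k + 1) ^ 2 - 4 * z ^ 2)) (π * tan (π * z)) := by
  have hz' : z ∈ integerComplement := fun ⟨n, hn⟩ => hz ⟨2 * n, by push_cast; rw [hn]⟩
  -- The odd-indexed terms of the cotangent series at `2z` are half those at `z`, so
  -- `π tan (π z) = (π cot (π z) - 1/z) - 2 (π cot (2π z) - 1/(2z))` is `-2` times the rest.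
  have hodd : HasSum (fun k => cotTerm (2 * z) (2 * k + 1)) ((π * cot (π * z) - 1 / z) / 2) := by
    simpa only [cotTerm_two_mul_two_mul_add_one] using (hasSum_cotTerm hz').div_const 2
  have hall := hasSum_cotTerm hz
  obtain ⟨e, heven⟩ := hall.summable.comp_injective (mul_right_injective₀ two_ne_zero)
  have hsplit := hall.unique (heven.even_add_odd hodd)
  have htan : π * tan (π * z) = -2 * e := by
    rw [tan_eq_cot_sub_two_mul_cot (by rw [mul_left_comm]; exact sin_pi_mul_ne_zero hz),
      mul_left_comm 2 (π : ℂ) z]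
    linear_combination (-2) * hsplit
  rw [htan]
  exact (heven.mul_left (-2)).congr_fun fun k =>
    (neg_two_mul_cotTerm_two_mul_two_mul hz k).symm

theorem four_mul_sq_lt_odd_sq_mul_pi_sq {x : ℝ} (hx : |x| < π / 2) (k : ℕ) :
    4 * x ^ 2 < (2 * k + 1 : ℝ) ^ 2 * π ^ 2 := by
  have h₁ : 4 * x ^ 2 < π ^ 2 := by nlinarith [abs_nonneg x, sq_abs x]
  have h₂ : π ^ 2 ≤ (2 * k + 1 : ℝ) ^ 2 * π ^ 2 :=
    le_mul_of_one_le_left (sq_nonneg π) (one_le_pow₀ (by linarith [k.cast_nonneg (α := ℝ)]))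
  linarith

theorem Real.hasSum_tan_partial_fractions {x : ℝ} (hx : |x| < π / 2) :
    HasSum (fun k : ℕ => 8 * x / ((2 * k + 1) ^ 2 * π ^ 2 - 4 * x ^ 2)) (Real.tan x) := by
  rcases eq_or_ne x 0 with rfl | hx0
  · simp
  have hz : 2 * ((x / π : ℝ) : ℂ) ∈ integerComplement := by
    rintro ⟨n, hn⟩
    have hn' : (n : ℝ) = 2 * (x / π) := by exact_mod_cast hn
    have hlt : |(n : ℝ)| < 1 := by
      rw [hn', abs_mul, abs_div, abs_two, abs_of_pos pi_pos]
      field_simp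
      linarith
    obtain rfl : n = 0 := Int.abs_lt_one_iff.mp (by exact_mod_cast hlt)
    simp [hx0, pi_ne_zero] at hn'
  have h := hasSum_pi_mul_tan hz
  push_cast at h
  rw [mul_div_cancel₀ _ (ofReal_ne_zero.2 pi_ne_zero)] at h
  have h' : HasSum (fun k : ℕ => 8 * (x / π) / ((2 * k + 1) ^ 2 - 4 * (x / π) ^ 2))
      (π * Real.tan x) := by
    rw [← hasSum_ofReal]
    push_cast
    exact h
  have hden (k : ℕ) : (2 * k + 1 : ℝ) ^ 2 * π ^ 2 - 4 * x ^ 2 ≠ 0 :=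
    (sub_pos.2 (four_mul_sq_lt_odd_sq_mul_pi_sq hx k)).ne'
  rw [← mul_div_cancel_left₀ (Real.tan x) pi_ne_zero]
  refine (h'.div_const π).congr_fun fun k => ?_
  field_simp

theorem hasSum_pow_mul_pow_odd {a x : ℝ} (h : (a * x) ^ 2 < 1) :
    HasSum (fun m : ℕ => a ^ (2 * m + 2) * x ^ (2 * m + 1)) (a ^ 2 * x / (1 - (a * x) ^ 2)) := by
  have hr : |(a * x) ^ 2| < 1 := by rwa [abs_of_nonneg (sq_nonneg _)]
  rw [div_eq_mul_inv]
  exact ((hasSum_geometric_of_abs_lt_one hr).mul_left (a ^ 2 * x)).congr_fun fun m => by ring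

theorem summable_one_div_two_mul_add_one_pow {p : ℕ} (hp : 1 < p) :
    Summable fun k : ℕ => 1 / (2 * (k : ℝ) + 1) ^ p := by
  have := (Real.summable_one_div_nat_pow.mpr hp).comp_injective
    (i := fun k : ℕ => 2 * k + 1) fun a b h => by simpa using h
  simpa [Function.comp_def] using this

theorem Summable.hasSum_of_prod_swap {α β γ : Type*} [AddCommMonoid α] [TopologicalSpace α]
    [ContinuousAdd α] [T3Space α] {f : β × γ → α} {g : β → α} {h : γ → α} {a : α}
    (hf : Summable f) (hrow : ∀ b, HasSum (fun c => f (b, c)) (g b)) (hg : HasSum g a)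
    (hcol : ∀ c, HasSum (fun b => f (b, c)) (h c)) : HasSum h a := by
  have hfa : HasSum f a := (hf.hasSum.prod_fiberwise hrow).unique hg ▸ hf.hasSum
  exact ((Equiv.prodComm γ β).hasSum_iff.mpr hfa).prod_fiberwise hcol

noncomputable def tanSeriesTerm (x : ℝ) (k m : ℕ) : ℝ :=
  2 * ((2 / π) ^ (2 * (m + 1)) * (1 / (2 * (k : ℝ) + 1) ^ (2 * (m + 1)))) * x ^ (2 * (m + 1) - 1)

theorem hasSum_tanSeriesTerm_row {x : ℝ} (hx : |x| < π / 2) (k : ℕ) :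
    HasSum (tanSeriesTerm x k) (8 * x / ((2 * k + 1) ^ 2 * π ^ 2 - 4 * x ^ 2)) := by
  have hden := four_mul_sq_lt_odd_sq_mul_pi_sq hx k
  have hk : (0 : ℝ) < 2 * k + 1 := by positivity
  set a : ℝ := 2 / π * (1 / (2 * k + 1)) with ha
  have hax : (a * x) ^ 2 < 1 := by
    rw [show (a * x) ^ 2 = 4 * x ^ 2 / ((2 * k + 1) ^ 2 * π ^ 2) by rw [ha]; field_simp; ring,
      div_lt_one (by positivity)]
    exact hden
  have hterm : tanSeriesTerm x k = fun m => 2 * (a ^ (2 * m + 2) * x ^ (2 * m + 1)) := by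
    funext m
    rw [tanSeriesTerm, show 2 * (m + 1) - 1 = 2 * m + 1 by omega,
      show 2 * (m + 1) = 2 * m + 2 by ring, ← one_div_pow, ← mul_pow, mul_assoc]
  have hsum : 8 * x / ((2 * k + 1) ^ 2 * π ^ 2 - 4 * x ^ 2) =
      2 * (a ^ 2 * x / (1 - (a * x) ^ 2)) := by
    have : 1 - (a * x) ^ 2 ≠ 0 := by linarith
    field_simp
    rw [ha]
    field_simp
    ring
  rw [hterm, hsum]
  exact (hasSum_pow_mul_pow_odd hax).mul_left 2

theorem summable_tanSeriesTerm {x : ℝ} (hx : |x| < π / 2) :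
    Summable fun p : ℕ × ℕ => tanSeriesTerm x p.1 p.2 := by
  have hrow := (hasSum_pow_mul_pow_odd (a := 2 / π) (x := |x|) (by
    rw [div_mul_eq_mul_div, div_pow, div_lt_one (by positivity)]
    nlinarith [abs_nonneg x])).summable.mul_left 2
  have hcol := summable_one_div_two_mul_add_one_pow one_lt_two
  refine .of_norm_bounded (hcol.mul_of_nonneg hrow (fun _ => by positivity)
    (fun _ => by positivity)) fun ⟨k, m⟩ => ?_
  have hk : (1 : ℝ) ≤ 2 * k + 1 := by linarith [k.cast_nonneg (α := ℝ)]
  have hpow := one_div_pow_le_one_div_pow_of_le hk (show 2 ≤ 2 * m + 2 by omega)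
  rw [Real.norm_eq_abs, tanSeriesTerm, show 2 * (m + 1) - 1 = 2 * m + 1 by omega,
    show 2 * (m + 1) = 2 * m + 2 by ring, abs_mul, abs_of_pos (by positivity), abs_pow]
  calc 2 * ((2 / π) ^ (2 * m + 2) * (1 / (2 * k + 1) ^ (2 * m + 2))) * |x| ^ (2 * m + 1)
      ≤ 2 * ((2 / π) ^ (2 * m + 2) * (1 / (2 * k + 1) ^ 2)) * |x| ^ (2 * m + 1) := by gcongr
    _ = 1 / (2 * k + 1) ^ 2 * (2 * ((2 / π) ^ (2 * m + 2) * |x| ^ (2 * m + 1))) := by ring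

theorem hasSum_tan_series (x : ℝ) (hx : |x| < π / 2) :
    HasSum
      (fun m : ℕ =>
        2 * ((2 / π) ^ (2 * (m + 1)) * ∑' k : ℕ, 1 / (2 * (k : ℝ) + 1) ^ (2 * (m + 1))) *
          x ^ (2 * (m + 1) - 1))
      (Real.tan x) := by
  refine (summable_tanSeriesTerm hx).hasSum_of_prod_swap (hasSum_tanSeriesTerm_row hx)
    (Real.hasSum_tan_partial_fractions hx) fun m => ?_
  have hodd := summable_one_div_two_mul_add_one_pow (p := 2 * (m + 1)) (by omega)
  exact ((hodd.hasSum.mul_left ((2 / π) ^ (2 * (m + 1)))).mul_left 2).mul_right _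
end

section
/- For every real number x with |x| < π/2, the series ∑_{m=1}^∞ a_m·x^{2m}/m converges and equals -log(cos x), where a_m := (2/π)^{2m} · ∑_{k=0}^∞ 1/(2k+1)^{2m}. -/
/-!
Euler's product for the sine at `2x` and at `x`, together with `sin 2x = 2 sin x cos x`, gives
`cos x = ∏ₖ (1 - (2x/π)² / (2k+1)²)`. Taking logarithms and expanding each
`-log (1 - t) = ∑ₘ tᵐ / m` yields a double series of nonnegative terms; summing it in the other
order, the inner sums are `(2x/π)^(2m) λ(2m) / m`.
-/

open Real Filter Topology

theorem HasSum.tsum_swap_of_nonneg {β γ : Type*} {f : β → γ → ℝ} (hf : ∀ b c, 0 ≤ f b c)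
    {r : γ → ℝ} {s : ℝ} (hr : ∀ c, HasSum (fun b => f b c) (r c)) (hs : HasSum r s) :
    HasSum (fun b => ∑' c, f b c) s := by
  have hsummable : Summable fun p : γ × β => f p.2 p.1 :=
    (summable_prod_of_nonneg fun p => hf p.2 p.1).2
      ⟨fun c => (hr c).summable, hs.summable.congr fun c => ((hr c).tsum_eq).symm⟩
  have hsum : HasSum (fun p : γ × β => f p.2 p.1) s := by
    rw [← (hsummable.hasSum.prod_fiberwise hr).unique hs]
    exact hsummable.hasSum
  have hswap : HasSum (fun p : β × γ => f p.1 p.2) s :=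
    (Equiv.prodComm β γ).hasSum_iff.mpr hsum
  exact hswap.prod_fiberwise fun b => (hswap.summable.prod_factor b).hasSum

theorem sq_div_sq_lt_one {z a : ℝ} (hz : |z| < 1) (ha : 1 ≤ a) : z ^ 2 / a ^ 2 < 1 := by
  rw [div_lt_one (by positivity)]
  nlinarith [sq_abs z, abs_nonneg z]

theorem hasSum_neg_log_one_sub_sq_div_sq {z : ℝ} (hz0 : z ≠ 0) (hz : |z| < 1) :
    HasSum (fun j : ℕ => -log (1 - z ^ 2 / ((j : ℝ) + 1) ^ 2)) (-log (sin (π * z) / (π * z))) := by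
  have hfactor_pos (j : ℕ) : 0 < 1 - z ^ 2 / ((j : ℝ) + 1) ^ 2 :=
    sub_pos.2 (sq_div_sq_lt_one hz (by simp))
  have hπz : π * z ≠ 0 := mul_ne_zero pi_ne_zero hz0
  have hsin : sin (π * z) ≠ 0 := by
    obtain ⟨hlo, hhi⟩ := abs_lt.1 hz
    rw [Ne, sin_eq_zero_iff_of_lt_of_lt (by nlinarith [pi_pos]) (by nlinarith [pi_pos])]
    exact hπz
  have hprod : Tendsto (fun n : ℕ => ∏ j ∈ Finset.range n, (1 - z ^ 2 / ((j : ℝ) + 1) ^ 2))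
      atTop (𝓝 (sin (π * z) / (π * z))) :=
    ((tendsto_euler_sin_prod z).div_const (π * z)).congr fun n => mul_div_cancel_left₀ _ hπz
  rw [hasSum_iff_tendsto_nat_of_nonneg fun j => neg_nonneg.2 <|
    log_nonpos (hfactor_pos j).le (sub_le_self _ (by positivity))]
  refine ((continuousAt_log (div_ne_zero hsin hπz)).tendsto.comp hprod).neg.congr fun n => ?_
  simp only [Function.comp_apply, log_prod fun j _ => (hfactor_pos j).ne', Finset.sum_neg_distrib]

theorem abs_two_mul_div_pi_lt_one {x : ℝ} (hx : |x| < π / 2) : |2 * x / π| < 1 := by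
  rw [abs_div, abs_mul, abs_two, abs_of_pos pi_pos, div_lt_one pi_pos]
  linarith

theorem hasSum_neg_log_one_sub_sq_div_odd_sq {x : ℝ} (hx : |x| < π / 2) :
    HasSum (fun k : ℕ => -log (1 - (2 * x / π) ^ 2 / (2 * (k : ℝ) + 1) ^ 2)) (-log (cos x)) := by
  rcases eq_or_ne x 0 with rfl | hx0
  · simp
  obtain ⟨hlo, hhi⟩ := abs_lt.1 hx
  have hsin : sin x ≠ 0 := by
    rw [Ne, sin_eq_zero_iff_of_lt_of_lt (by linarith) (by linarith)]
    exact hx0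
  have hcos : cos x ≠ 0 := (cos_pos_of_mem_Ioo ⟨hlo, hhi⟩).ne'
  have hz : |2 * x / π| < 1 := abs_two_mul_div_pi_lt_one hx
  have hall := hasSum_neg_log_one_sub_sq_div_sq (by positivity) hz
  have hodd := hasSum_neg_log_one_sub_sq_div_sq (z := x / π) (by positivity) (by
    rw [mul_div_assoc, abs_mul, abs_two] at hz; linarith [abs_nonneg (x / π)])
  rw [mul_div_cancel₀ _ pi_ne_zero] at hall hodd
  set f := fun j : ℕ => -log (1 - (2 * x / π) ^ 2 / ((j : ℝ) + 1) ^ 2)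
  -- the odd-indexed factors of Euler's product for `sin (2 x)` are those of `sin x`
  have hodd' : HasSum (fun k => f (2 * k + 1)) (-log (sin x / x)) := by
    convert hodd using 1
    ext k
    simp only [f]
    congr 3
    push_cast
    field_simp
    ring
  obtain ⟨e, heven⟩ : Summable fun k => f (2 * k) :=
    hall.summable.comp_injective (mul_right_injective₀ two_ne_zero)
  have he : e = -log (sin (2 * x) / (2 * x)) - -log (sin x / x) := by
    rw [← (heven.even_add_odd hodd').unique hall, add_sub_cancel_right]
  convert heven using 1
  · ext k
    simp only [f]
    push_cast
    ring
  · rw [he, sin_two_mul, show 2 * sin x * cos x / (2 * x) = sin x / x * cos x by field_simp,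
      log_mul (div_ne_zero hsin hx0) hcos]
    ring

theorem hasSum_neg_log_cos_series (x : ℝ) (hx : |x| < π / 2) :
    HasSum
      (fun m : ℕ =>
        ((2 / π) ^ (2 * (m + 1)) * ∑' k : ℕ, 1 / (2 * (k : ℝ) + 1) ^ (2 * (m + 1))) *
          x ^ (2 * (m + 1)) / ((m : ℝ) + 1))
      (-Real.log (Real.cos x)) := by
  set t : ℕ → ℝ := fun k => (2 * x / π) ^ 2 / (2 * (k : ℝ) + 1) ^ 2
  have ht (k : ℕ) : |t k| < 1 := by
    rw [abs_of_nonneg (by positivity)]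
    exact sq_div_sq_lt_one (abs_two_mul_div_pi_lt_one hx) (by simp)
  have hswap := HasSum.tsum_swap_of_nonneg (f := fun (m k : ℕ) => t k ^ (m + 1) / ((m : ℝ) + 1))
    (fun m k => by positivity) (fun k => hasSum_pow_div_log_of_abs_lt_one (ht k))
    (hasSum_neg_log_one_sub_sq_div_odd_sq hx)
  convert hswap using 2 with m
  have hterm (k : ℕ) : t k ^ (m + 1) / ((m : ℝ) + 1) =
      (2 / π) ^ (2 * (m + 1)) * x ^ (2 * (m + 1)) / ((m : ℝ) + 1) *
        (1 / (2 * (k : ℝ) + 1) ^ (2 * (m + 1))) := by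
    simp only [t, div_pow, ← pow_mul, mul_div_right_comm 2 x π, mul_pow]
    ring
  rw [tsum_congr hterm, tsum_mul_left]
  ring
end

section
/- Let t : ℝ → ℝ be differentiable on the open interval (-π/2, π/2) with t(0) = 0 and t'(x) = 1/2 + 2·t(x)² for all x in (-π/2, π/2). Then t(x) = (tan x)/2 for all x in (-π/2, π/2). -/
/-!
With `u = 2 t` the equation becomes the Riccati equation `u' = 1 + u²`, along which `arctan ∘ u`
has derivative `1`. On a connected open set through the origin this forces `arctan (u x) = x`,
Euler's `x = arctan (2 t)`, and hence `u = tan`.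
-/

open Real Set

theorem hasDerivAt_arctan_of_hasDerivAt_one_add_sq {u : ℝ → ℝ} {x : ℝ}
    (hu : HasDerivAt u (1 + u x ^ 2) x) : HasDerivAt (fun y => arctan (u y)) 1 x := by
  convert hu.arctan using 1
  field_simp

theorem eqOn_tan_of_hasDerivAt_one_add_sq {s : Set ℝ} (hs : IsOpen s) (hs' : IsPreconnected s)
    {u : ℝ → ℝ} (hu : ∀ x ∈ s, HasDerivAt u (1 + u x ^ 2) x) (h0 : 0 ∈ s) (hu0 : u 0 = 0) :
    EqOn u tan s := by
  have hderiv (x : ℝ) (hx : x ∈ s) : HasDerivAt (fun y => arctan (u y)) 1 x :=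
    hasDerivAt_arctan_of_hasDerivAt_one_add_sq (hu x hx)
  have harctan : EqOn (fun x => arctan (u x)) id s :=
    hs.eqOn_of_deriv_eq hs' (fun x hx => (hderiv x hx).differentiableAt.differentiableWithinAt)
      differentiableOn_id (fun x hx => by simp [(hderiv x hx).deriv]) h0 (by simp [hu0])
  intro x hx
  simpa using congrArg tan (harctan hx)

theorem ode_uniqueness_half_tan (t : ℝ → ℝ)
    (hdiff : ∀ x ∈ Set.Ioo (-(π / 2)) (π / 2), DifferentiableAt ℝ t x)
    (h0 : t 0 = 0)
    (hderiv : ∀ x ∈ Set.Ioo (-(π / 2)) (π / 2), deriv t x = 1 / 2 + 2 * t x ^ 2) :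
    ∀ x ∈ Set.Ioo (-(π / 2)) (π / 2), t x = Real.tan x / 2 := by
  have hriccati : ∀ x ∈ Ioo (-(π / 2)) (π / 2),
      HasDerivAt (fun y => 2 * t y) (1 + (2 * t x) ^ 2) x := fun x hx => by
    have ht := (hdiff x hx).hasDerivAt.const_mul (2 : ℝ)
    rw [hderiv x hx] at ht
    exact ht.congr_deriv (by ring)
  have hzero : (0 : ℝ) ∈ Ioo (-(π / 2)) (π / 2) := ⟨by linarith [pi_pos], by linarith [pi_pos]⟩
  intro x hx
  have h2t := eqOn_tan_of_hasDerivAt_one_add_sq isOpen_Ioo isPreconnected_Ioo hriccati hzero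
    (by simp [h0]) hx
  linarith
end
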